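/- Let k and n be positive integers and m = kn+1. The map D ↦ T(D) given by the filling algorithm is a bijection from D_{m,n} onto T_n^k. -/

import Mathlib

open scoped Classical

/-- Number of North steps (letters `true`) among the first `i` letters of `w`. -/
def upCount (w : List Bool) (i : ℕ) : ℕ := (w.take i).count true

/-- Number of East steps (letters `false`) among the first `i` letters of `w`. -/
def rightCount (w : List Bool) (i : ℕ) : ℕ := (w.take i).count false

/-- `w` is an `(m,n)`-Dyck path: a word with `n` North letters (`true`) and `m` East
letters (`false`), each of whose prefixes with `b` North and `a` East letters
satisfies `b*m - a*n ≥ 0`. -/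
def IsDyck (m n : ℕ) (w : List Bool) : Prop :=
  w.length = m + n ∧ w.count true = n ∧
  ∀ i, n * rightCount w i ≤ m * upCount w i

/-- The rank of the `(i+1)`-st step (0-indexed `i`) of `w`, namely `b*m - a*n` where
`b` and `a` are the numbers of North and East letters among the first `i` letters. -/
def rank (m n : ℕ) (w : List Bool) (i : ℕ) : ℤ :=
  (m : ℤ) * upCount w i - (n : ℤ) * rightCount w i

/-- The sweep map: list the steps of `w` in increasing order of their ranks. -/
def sweep (m n : ℕ) (w : List Bool) : List Bool :=
  (((List.range w.length).mergeSort
      (fun i j => decide (rank m n w i ≤ rank m n w j))).map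
    (fun i => w.getD i false))

/-- The word `EN(w)`: list the steps of `w` in increasing order of their end ranks
(the end rank of the `(i+1)`-st step is `rank w (i+1)`). -/
def sweepEN (m n : ℕ) (w : List Bool) : List Bool :=
  (((List.range w.length).mergeSort
      (fun i j => decide (rank m n w (i + 1) ≤ rank m n w (j + 1)))).map
    (fun i => w.getD i false))

/-- One step of the filling algorithm: place entry `p.1` according to letter `p.2`
(`true` = S : start a new column; `false` = W : put it below the smallest active
entry, an active entry being the current bottom entry of a column of height `< k+1`). -/
def fillStep (k : ℕ) (cols : List (List ℕ)) (p : ℕ × Bool) : List (List ℕ) :=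
  if p.2 then cols ++ [[p.1]]
  else
    match ((List.range cols.length).filter
        (fun j => (cols.getD j []).length < k + 1)).argmin
        (fun j => (cols.getD j []).getLastD 0) with
    | none => cols
    | some j => cols.set j ((cols.getD j []) ++ [p.1])

/-- The state (list of columns, each recorded top to bottom) of the filling algorithm
after the entries `1, …, t` have been placed according to the first `t` letters of `w`. -/
def fillColsUpTo (k : ℕ) (w : List Bool) (t : ℕ) : List (List ℕ) :=
  ((List.range t).map (fun i => (i + 1, w.getD i false))).foldl (fillStep k) []

/-- The final state of the filling algorithm on the word `w` (entries
`1, …, m+n-1` placed, i.e. all letters but the last one processed). -/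
def fillCols (k : ℕ) (w : List Bool) : List (List ℕ) :=
  fillColsUpTo k w (w.length - 1)

/-- The tableau `T(D)` produced by the filling algorithm, as a function
(row, column) ↦ entry, rows and columns 0-indexed. -/
def fillTableau (k n : ℕ) (w : List Bool) : Fin (k + 1) → Fin n → ℕ :=
  fun i j => ((fillCols k w).getD j []).getD i 0

/-- `T` fills the `(k+1) × n` array with `1, …, (k+1)n`, increasing along rows and
columns. -/
def IsFilling (k n : ℕ) (T : Fin (k + 1) → Fin n → ℕ) : Prop :=
  (∀ i j, T i j ∈ Finset.Icc 1 ((k + 1) * n)) ∧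
  Function.Injective (fun p : Fin (k + 1) × Fin n => T p.1 p.2) ∧
  (∀ i, StrictMono (T i)) ∧
  (∀ j, StrictMono (fun i => T i j))

/-- For all entries `a < b < c < d` of `T` with `d` directly below `a`, the entries
`b` and `c` do not lie in the same column. -/
def NoBadQuadruple (k n : ℕ) (T : Fin (k + 1) → Fin n → ℕ) : Prop :=
  ∀ (i : Fin (k + 1)) (hi : (i : ℕ) + 1 < k + 1) (j : Fin n)
    (r r' : Fin (k + 1)) (c : Fin n), r < r' →
      ¬ (T i j < T r c ∧ T r c < T r' c ∧ T r' c < T ⟨(i : ℕ) + 1, hi⟩ j)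

/-- The family `𝒯ₙᵏ` of tableaux. -/
def IsFussTableau (k n : ℕ) (T : Fin (k + 1) → Fin n → ℕ) : Prop :=
  IsFilling k n T ∧ NoBadQuadruple k n T

/-- A value `r` is marked for `T` when `r - 1` is a bottom-row entry of `T`. -/
def Marked (k n : ℕ) (T : Fin (k + 1) → Fin n → ℕ) (r : ℕ) : Prop :=
  ∃ j : Fin n, T (Fin.last k) j + 1 = r

/-- One move of the walk `w(T)` on the values `1, …, M` (where `M = m + n`):
from a row-1 entry `x` move to `r + 1` where `r` is the bottom entry of the column
of `x`; from an entry `x` of one of the rows `2, …, k+1` move to the largest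
unmarked value `≤ r`, where `r` is the entry directly above `x`; from `x = M`
move to the largest unmarked value `< M`. -/
noncomputable def walkStep (k n M : ℕ) (T : Fin (k + 1) → Fin n → ℕ) (x : ℕ) : ℕ :=
  if h : ∃ j : Fin n, T 0 j = x then
    T (Fin.last k) (Classical.choose h) + 1
  else if h2 : ∃ p : Fin (k + 1) × Fin n, T p.1 p.2 = x then
    let p := Classical.choose h2
    ((((Finset.Icc 1 M).filter
        (fun y => y ≤ T (⟨(p.1 : ℕ) - 1, lt_of_le_of_lt (Nat.sub_le _ _) p.1.2⟩ : Fin (k + 1)) p.2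
          ∧ ¬ Marked k n T y))).max).getD 0
  else
    ((((Finset.Icc 1 M).filter (fun y => y < M ∧ ¬ Marked k n T y))).max).getD 0

/-- The area of the path `w`: the number of lattice cells of the `m × n` rectangle
lying below the path whose interiors lie entirely above the diagonal.
The cell in column `x` and row `y` (0-indexed) has its interior above the diagonal
iff `n*(x+1) ≤ m*y`, and lies below the path iff the `(y+1)`-st North step of `w`
occurs before the `(x+1)`-st East step. -/
def nthLetterIdx (w : List Bool) (b : Bool) (j : ℕ) : ℕ :=
  (((List.range w.length).filter (fun i => w.getD i false = b))).getD j 0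

def area (m n : ℕ) (w : List Bool) : ℕ :=
  ((Finset.range m ×ˢ Finset.range n).filter
    (fun p => n * (p.1 + 1) ≤ m * p.2 ∧
      nthLetterIdx w true p.2 < nthLetterIdx w false p.1)).card

/-- The reduction `red(T)`: delete column 1 and replace each remaining entry `i` by
`i` minus the number of column-1 entries smaller than `i`. -/
def red (k n : ℕ) (T : Fin (k + 1) → Fin n → ℕ) : Fin (k + 1) → Fin (n - 1) → ℕ :=
  fun i j =>
    let v := T i ⟨(j : ℕ) + 1, by have := j.2; omega⟩
    v - (Finset.univ.filter
      (fun u : Fin (k + 1) => T u ⟨0, by have := j.2; omega⟩ < v)).card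

/-- The (finite) set of `(m,n)`-Dyck paths as a `Finset` of words. -/
noncomputable def dyckFinset (m n : ℕ) : Finset (List Bool) :=
  ((Finset.univ : Finset (Fin (m + n) → Bool)).image List.ofFn).filter
    (fun w => IsDyck m n w)

/-!
Run on a Dyck word, the filling algorithm keeps its columns a partial tableau on `1, …, t`
(`IsPartialTableau`) whose top entries are the positions of the North steps, in which no two
consecutive entries of a column enclose two entries of another column, and in which every other
column has at most one entry beyond the bottom of an active column (`FillInv`). The Dyck
inequality says that the columns opened by the first `t` letters have room for `t` entries, so
every East step before the last one finds an active entry; the last letter is East. Hence `T(D)`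
is a full tableau in `𝒯ₙᵏ`, and its top row gives back `D`.

Conversely, for `T ∈ 𝒯ₙᵏ` the algorithm run on the word of its top row rebuilds `T` entry
by entry: if `t + 1` lies below an entry of column `j`, the forbidden pattern forces the bottom
of column `j` among the entries `≤ t` to be the smallest active entry. The entries `≤ t` all lie
in the columns whose top is `≤ t`, which gives the Dyck inequality for that word.
-/

namespace List

variable {α : Type*} {l : List α} {d : α} {i i' : ℕ}

lemma getD_mem (h : i < l.length) : l.getD i d ∈ l := by
  rw [List.getD_eq_getElem _ _ h]; exact List.getElem_mem h

lemma getLastD_eq_getD : l.getLastD d = l.getD (l.length - 1) d := by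
  rw [List.getLastD_eq_getLast?, List.getLast?_eq_getElem?, List.getD_eq_getElem?_getD]

lemma getLastD_mem (h : l ≠ []) : l.getLastD d ∈ l := by
  rw [getLastD_eq_getD]
  exact getD_mem (by have := List.length_pos_iff.mpr h; omega)

lemma exists_getD_eq {x : α} (h : x ∈ l) : ∃ i < l.length, l.getD i d = x := by
  obtain ⟨i, hi, rfl⟩ := List.getElem_of_mem h
  exact ⟨i, hi, List.getD_eq_getElem _ _ hi⟩

lemma Pairwise.rel_getD {R : α → α → Prop} (hl : l.Pairwise R) (hii : i < i')
    (h : i' < l.length) : R (l.getD i d) (l.getD i' d) := by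
  rw [List.getD_eq_getElem _ _ (hii.trans h), List.getD_eq_getElem _ _ h]
  exact List.pairwise_iff_getElem.1 hl i i' _ h hii

lemma getD_concat_length (x : α) : (l ++ [x]).getD l.length d = x := by
  simp [List.getD_eq_getElem?_getD]

lemma le_getLastD_of_mem {l : List ℕ} (hl : l.Pairwise (· < ·)) {x : ℕ} (hx : x ∈ l) :
    x ≤ l.getLastD 0 := by
  obtain ⟨i, hi, rfl⟩ := exists_getD_eq (d := 0) hx
  rw [getLastD_eq_getD]
  rcases Nat.lt_or_ge i (l.length - 1) with h | h
  · exact (hl.rel_getD h (by omega)).le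
  · rw [show i = l.length - 1 by omega]

lemma sum_set_add_getElem {L : List ℕ} {j : ℕ} (a : ℕ) (h : j < L.length) :
    (L.set j a).sum + L[j] = L.sum + a := by
  rw [List.sum_set, if_pos h, ← List.sum_take_add_sum_drop L j, List.drop_eq_getElem_cons h]
  simp only [List.sum_cons]
  omega

end List

section CardFilter

variable {N : ℕ} {f : Fin N → ℕ}

lemma Monotone.le_iff_lt_card_filter (hf : Monotone f) (t : ℕ) (i : Fin N) :
    f i ≤ t ↔ (i : ℕ) < (Finset.univ.filter fun i => f i ≤ t).card := by
  constructor
  · intro h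
    have hsub : Finset.Iic i ⊆ Finset.univ.filter fun i => f i ≤ t := fun i' hi' => by
      simpa using (hf (Finset.mem_Iic.1 hi')).trans h
    simpa using Finset.card_le_card hsub
  · intro h
    by_contra hlt
    have hsub : (Finset.univ.filter fun i => f i ≤ t) ⊆ Finset.Iio i := fun i' hi' => by
      simpa using hf.reflect_lt ((Finset.mem_filter.1 hi').2.trans_lt (not_le.1 hlt))
    have := Finset.card_le_card hsub
    simp only [Fin.card_Iio] at this
    omega

lemma StrictMono.card_filter_lt_eq (hf : StrictMono f) {r : Fin N} {s : ℕ} (h : f r = s) :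
    (Finset.univ.filter fun i => f i < s).card = r := by
  rw [show (Finset.univ.filter fun i => f i < s) = Finset.Iio r by
    ext i; simp [← h, hf.lt_iff_lt], Fin.card_Iio]

lemma StrictMono.card_filter_le_eq (hf : StrictMono f) {r : Fin N} {s : ℕ} (h : f r = s) :
    (Finset.univ.filter fun i => f i ≤ s).card = r + 1 := by
  rw [show (Finset.univ.filter fun i => f i ≤ s) = Finset.Iic r by
    ext i; simp [← h, hf.le_iff_le], Fin.card_Iic]

lemma card_filter_le_succ_of_ne (t : ℕ) (h : ∀ i, f i ≠ t + 1) :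
    (Finset.univ.filter fun i => f i ≤ t + 1).card =
      (Finset.univ.filter fun i => f i ≤ t).card := by
  congr 1
  exact Finset.filter_congr fun i _ => ⟨fun hi => by have := h i; omega, fun hi => by omega⟩

end CardFilter

lemma upCount_succ (w : List Bool) (t : ℕ) :
    upCount w (t + 1) = upCount w t + if w.getD t false = true then 1 else 0 := by
  unfold upCount
  rcases Nat.lt_or_ge t w.length with h | h
  · rw [List.take_add_one, List.getElem?_eq_getElem h, List.getD_eq_getElem _ _ h]
    cases w[t] <;> simp
  · rw [List.take_of_length_le h, List.take_of_length_le (by omega),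
      List.getD_eq_default _ _ h]
    simp

lemma upCount_add_rightCount {w : List Bool} {i : ℕ} (h : i ≤ w.length) :
    upCount w i + rightCount w i = i := by
  rw [upCount, rightCount, List.count_true_add_count_false, List.length_take, min_eq_left h]

lemma upCount_length (w : List Bool) : upCount w w.length = w.count true := by
  rw [upCount, List.take_length]

namespace IsDyck

variable {m n : ℕ} {w : List Bool}

lemma getD_last (hD : IsDyck m n w) (hm : 0 < m) (hn : 0 < n) :
    w.getD (m + n - 1) false = false := by
  have hlen : m + n - 1 + 1 = w.length := by rw [hD.1]; omega
  have hup := upCount_succ w (m + n - 1)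
  rw [hlen, upCount_length, hD.2.1] at hup
  have hsum := upCount_add_rightCount (w := w) (i := m + n - 1) (by omega)
  have hdyck := hD.2.2 (m + n - 1)
  by_contra hl
  rw [if_pos (by simpa using hl)] at hup
  rw [show upCount w (m + n - 1) = n - 1 by omega, show rightCount w (m + n - 1) = m by omega]
    at hdyck
  have : m * (n - 1) < n * m := by
    rw [mul_comm n, Nat.mul_lt_mul_left hm]; omega
  omega

lemma upCount_pred_length (hD : IsDyck m n w) (hm : 0 < m) (hn : 0 < n) :
    upCount w (m + n - 1) = n := by
  have hlen : m + n - 1 + 1 = w.length := by rw [hD.1]; omega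
  have hup := upCount_succ w (m + n - 1)
  rw [hlen, upCount_length, hD.2.1, hD.getD_last hm hn, if_neg Bool.false_ne_true,
    add_zero] at hup
  exact hup.symm

variable {k : ℕ}

lemma lt_mul_upCount (hD : IsDyck m n w) (hm : m = k * n + 1) {t : ℕ}
    (ht : t < (k + 1) * n) (hl : w.getD t false = false) :
    t < (k + 1) * upCount w t := by
  have hup := upCount_succ w t
  rw [hl, if_neg Bool.false_ne_true, add_zero] at hup
  have hsum := upCount_add_rightCount (w := w) (i := t + 1) (by rw [hD.1, hm]; nlinarith)
  have hle : upCount w (t + 1) ≤ n := hD.2.1 ▸ (List.take_sublist _ _).count_le true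
  have hdyck := hD.2.2 (t + 1)
  rw [hup] at hsum hle hdyck
  set b := upCount w t
  rcases hle.lt_or_eq with hb | rfl
  · have : n * rightCount w (t + 1) < n * (k * b + 1) := by
      calc n * rightCount w (t + 1) ≤ m * b := hdyck
        _ = k * n * b + b := by rw [hm]; ring
        _ < n * (k * b + 1) := by nlinarith
    have := Nat.lt_of_mul_lt_mul_left this
    nlinarith
  · exact ht

end IsDyck

namespace IsFilling

variable {k n : ℕ} {T : Fin (k + 1) → Fin n → ℕ}

lemma eq_and_eq_of_eq (hT : IsFilling k n T) {i i' : Fin (k + 1)} {j j' : Fin n}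
    (h : T i j = T i' j') : i = i' ∧ j = j' :=
  Prod.ext_iff.1 (hT.2.1 (a₁ := (i, j)) (a₂ := (i', j')) h)

lemma image_eq (hT : IsFilling k n T) :
    Finset.univ.image (fun p : Fin (k + 1) × Fin n => T p.1 p.2) = Finset.Icc 1 ((k + 1) * n) :=
  Finset.eq_of_subset_of_card_le
    (fun _ hx => by obtain ⟨p, -, rfl⟩ := Finset.mem_image.1 hx; exact hT.1 p.1 p.2)
    (by rw [Finset.card_image_of_injective _ hT.2.1]; simp)

lemma exists_eq (hT : IsFilling k n T) {x : ℕ} (h1 : 1 ≤ x) (h2 : x ≤ (k + 1) * n) :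
    ∃ i j, T i j = x := by
  obtain ⟨p, -, hp⟩ := Finset.mem_image.1 (hT.image_eq ▸ Finset.mem_Icc.2 ⟨h1, h2⟩)
  exact ⟨p.1, p.2, hp⟩

lemma card_filter_le (hT : IsFilling k n T) {x : ℕ} (hx : x ≤ (k + 1) * n) :
    (Finset.univ.filter fun p : Fin (k + 1) × Fin n => T p.1 p.2 ≤ x).card = x := by
  rw [← Finset.card_image_of_injective _ hT.2.1, ← Finset.filter_image (p := (· ≤ x)),
    hT.image_eq]
  rw [show (Finset.Icc 1 ((k + 1) * n)).filter (· ≤ x) = Finset.Icc 1 x by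
    ext y; simp only [Finset.mem_filter, Finset.mem_Icc]; omega]
  simp

end IsFilling

lemma IsFussTableau.lt_of_lt_succ_row {k n : ℕ} {T : Fin (k + 1) → Fin n → ℕ}
    (hT : IsFussTableau k n T) {i r r' : Fin (k + 1)} (hi : (i : ℕ) + 1 < k + 1) {j c : Fin n}
    (hjc : j ≠ c) (hr : r < r') (h : T r' j < T ⟨i + 1, hi⟩ c) : T r j < T i c := by
  -- otherwise `T i c < T r j < T r' j < T (i + 1) c` is a forbidden pattern
  refine (lt_or_gt_of_ne fun h => hjc (hT.1.eq_and_eq_of_eq h).2).resolve_right fun hlt => ?_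
  exact hT.2 i hi c r r' j hr ⟨hlt, hT.1.2.2.2 j hr, h⟩

namespace FillingBijection

def colAt (cols : List (List ℕ)) (j : ℕ) : List ℕ := cols.getD j []

def addBelow (cols : List (List ℕ)) (j x : ℕ) : List (List ℕ) :=
  cols.set j (colAt cols j ++ [x])

section Columns

variable {cols : List (List ℕ)} {l : List ℕ} {j c x y : ℕ}

lemma colAt_mem (h : j < cols.length) : colAt cols j ∈ cols := List.getD_mem h

lemma exists_colAt_eq (h : l ∈ cols) : ∃ j < cols.length, colAt cols j = l :=
  List.exists_getD_eq h

lemma lt_length_of_mem_colAt (h : y ∈ colAt cols j) : j < cols.length := by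
  by_contra hj
  simp [colAt, List.getD_eq_getElem?_getD, hj] at h

lemma ext_colAt {cols' : List (List ℕ)} (hl : cols.length = cols'.length)
    (h : ∀ j < cols.length, colAt cols j = colAt cols' j) : cols = cols' := by
  refine List.ext_getElem hl fun j h₁ h₂ => ?_
  have := h j h₁
  rwa [colAt, colAt, List.getD_eq_getElem _ _ h₁, List.getD_eq_getElem _ _ h₂] at this

lemma colAt_append_of_lt (h : j < cols.length) : colAt (cols ++ [l]) j = colAt cols j :=
  List.getD_append _ _ _ _ h

lemma colAt_append_length : colAt (cols ++ [l]) cols.length = l := List.getD_concat_length l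

lemma colAt_append_cases (hj : j < (cols ++ [l]).length) :
    (j < cols.length ∧ colAt (cols ++ [l]) j = colAt cols j) ∨
      (j = cols.length ∧ colAt (cols ++ [l]) j = l) := by
  rcases Nat.lt_or_ge j cols.length with h | h
  · exact .inl ⟨h, colAt_append_of_lt h⟩
  · have : j = cols.length := by simp at hj; omega
    exact .inr ⟨this, this ▸ colAt_append_length⟩

lemma forall_colAt_append {P : List ℕ → Prop} (hP : ∀ j < cols.length, P (colAt cols j))
    (hl : P l) : ∀ j < (cols ++ [l]).length, P (colAt (cols ++ [l]) j) := fun j hj => by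
  rcases colAt_append_cases hj with ⟨hj, h⟩ | ⟨_, h⟩ <;> rw [h]
  exacts [hP j hj, hl]

@[simp] lemma length_addBelow : (addBelow cols j x).length = cols.length := List.length_set

lemma colAt_addBelow_self (h : j < cols.length) :
    colAt (addBelow cols j x) j = colAt cols j ++ [x] := by
  simp [addBelow, colAt, List.getD_eq_getElem?_getD, h]

lemma colAt_addBelow_of_ne (h : c ≠ j) : colAt (addBelow cols j x) c = colAt cols c := by
  simp [addBelow, colAt, List.getD_eq_getElem?_getD, List.getElem?_set_ne (Ne.symm h)]

lemma forall_colAt_addBelow {P : List ℕ → Prop}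
    (hP : ∀ c < cols.length, c ≠ j → P (colAt cols c)) (hj : P (colAt cols j ++ [x])) :
    ∀ c < (addBelow cols j x).length, P (colAt (addBelow cols j x) c) :=
  fun c hc => by
    by_cases hcj : c = j
    · subst hcj; rwa [colAt_addBelow_self (by simpa using hc)]
    · rw [colAt_addBelow_of_ne hcj]; exact hP c (by simpa using hc) hcj

lemma mem_colAt_addBelow (h : y ∈ colAt (addBelow cols j x) c) :
    y ∈ colAt cols c ∨ (c = j ∧ y = x) := by
  by_cases hc : c = j
  · subst hc
    have hj : c < cols.length := by simpa using lt_length_of_mem_colAt h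
    rw [colAt_addBelow_self hj, List.mem_append, List.mem_singleton] at h
    tauto
  · rw [colAt_addBelow_of_ne hc] at h
    exact .inl h

lemma mem_colAt_of_mem_colAt_addBelow (h : y ∈ colAt (addBelow cols j x) c) (hyx : y ≠ x) :
    y ∈ colAt cols c :=
  (mem_colAt_addBelow h).resolve_right fun h' => hyx h'.2

lemma mem_colAt_addBelow_of_mem (h : y ∈ colAt cols c) : y ∈ colAt (addBelow cols j x) c := by
  by_cases hc : c = j
  · subst hc
    rw [colAt_addBelow_self (lt_length_of_mem_colAt h)]
    exact List.mem_append_left _ h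
  · rwa [colAt_addBelow_of_ne hc]

lemma head_colAt_addBelow (hne : colAt cols c ≠ []) :
    (colAt (addBelow cols j x) c).getD 0 0 = (colAt cols c).getD 0 0 := by
  by_cases hc : c = j
  · subst hc
    rw [colAt_addBelow_self (lt_length_of_mem_colAt (List.getLastD_mem (d := 0) hne)),
      List.getD_append _ _ _ _ (List.length_pos_iff.mpr hne)]
  · rw [colAt_addBelow_of_ne hc]

lemma sum_length_addBelow (h : j < cols.length) :
    ((addBelow cols j x).map List.length).sum = (cols.map List.length).sum + 1 := by
  have := List.sum_set_add_getElem ((colAt cols j).length + 1) (L := cols.map List.length)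
    (by simpa using h)
  simp only [List.getElem_map] at this
  rw [addBelow, List.map_set, List.length_append, List.length_singleton]
  rw [colAt, List.getD_eq_getElem _ _ h] at this ⊢
  omega

end Columns

def IsSmallestActive (k : ℕ) (cols : List (List ℕ)) (j : ℕ) : Prop :=
  j < cols.length ∧ (colAt cols j).length < k + 1 ∧
    ∀ c < cols.length, c ≠ j → (colAt cols c).length < k + 1 →
      (colAt cols j).getLastD 0 < (colAt cols c).getLastD 0

lemma fillStep_false_of_isSmallestActive {k : ℕ} {cols : List (List ℕ)} {j : ℕ}
    (h : IsSmallestActive k cols j) (x : ℕ) :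
    fillStep k cols (x, false) = addBelow cols j x := by
  obtain ⟨hj, hact, hmin⟩ := h
  set L := (List.range cols.length).filter (fun j => (cols.getD j []).length < k + 1)
  have memL : ∀ c, c ∈ L ↔ c < cols.length ∧ (colAt cols c).length < k + 1 := by
    simp [L, colAt]
  obtain ⟨j', hj'⟩ : ∃ j', L.argmin (fun j => (cols.getD j []).getLastD 0) = some j' :=
    Option.ne_none_iff_exists'.mp
      (by rw [Ne, List.argmin_eq_none]; exact List.ne_nil_of_mem ((memL j).2 ⟨hj, hact⟩))
  obtain rfl : j' = j := by
    by_contra hne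
    obtain ⟨hj'len, hj'act⟩ := (memL j').1 (List.argmin_mem hj')
    exact (List.le_of_mem_argmin ((memL j).2 ⟨hj, hact⟩) hj').not_gt (hmin j' hj'len hne hj'act)
  simp only [fillStep, Bool.false_eq_true, if_false]
  rw [hj']
  rfl

lemma fillColsUpTo_succ (k : ℕ) (w : List Bool) (t : ℕ) :
    fillColsUpTo k w (t + 1) = fillStep k (fillColsUpTo k w t) (t + 1, w.getD t false) := by
  rw [fillColsUpTo, List.range_succ, List.map_append, List.foldl_append]
  rfl

structure IsPartialTableau (k t : ℕ) (cols : List (List ℕ)) : Prop where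
  ne_nil : ∀ j < cols.length, colAt cols j ≠ []
  length_le : ∀ j < cols.length, (colAt cols j).length ≤ k + 1
  sorted : ∀ j < cols.length, (colAt cols j).Pairwise (· < ·)
  mem_Icc : ∀ j < cols.length, ∀ x ∈ colAt cols j, 1 ≤ x ∧ x ≤ t
  exists_mem : ∀ x, 1 ≤ x → x ≤ t → ∃ j < cols.length, x ∈ colAt cols j
  eq_of_mem : ∀ j < cols.length, ∀ j' < cols.length, ∀ x ∈ colAt cols j,
    x ∈ colAt cols j' → j = j'
  sum_length : (cols.map List.length).sum = t
  length_antitone : ∀ j j', j ≤ j' → j' < cols.length →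
    (colAt cols j').length ≤ (colAt cols j).length
  row_lt : ∀ j j', j < j' → j' < cols.length → ∀ i < (colAt cols j').length,
    (colAt cols j).getD i 0 < (colAt cols j').getD i 0

structure FillInv (k : ℕ) (w : List Bool) (t : ℕ) (cols : List (List ℕ)) : Prop
    extends IsPartialTableau k t cols where
  length_eq : cols.length = upCount w t
  head_iff : ∀ x, (∃ j < cols.length, (colAt cols j).getD 0 0 = x) ↔
    1 ≤ x ∧ x ≤ t ∧ w.getD (x - 1) false = true
  -- what keeps `no_bad` alive when an entry is placed below the smallest active entry
  below_active : ∀ j < cols.length, (colAt cols j).length < k + 1 →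
    ∀ c < cols.length, c ≠ j → ∀ x ∈ colAt cols c, ∀ y ∈ colAt cols c,
      (colAt cols j).getLastD 0 < x → (colAt cols j).getLastD 0 < y → x = y
  no_bad : ∀ j < cols.length, ∀ i, i + 1 < (colAt cols j).length →
    ∀ c < cols.length, ∀ x ∈ colAt cols c, ∀ y ∈ colAt cols c, x < y →
      ¬((colAt cols j).getD i 0 < x ∧ y < (colAt cols j).getD (i + 1) 0)

lemma fillInv_nil (k : ℕ) (w : List Bool) : FillInv k w 0 [] := by
  refine ⟨⟨?_, ?_, ?_, ?_, ?_, ?_, ?_, ?_, ?_⟩, ?_, ?_, ?_, ?_⟩ <;>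
    simp [colAt, upCount] <;> omega

namespace IsPartialTableau

variable {k t : ℕ} {cols : List (List ℕ)}

lemma le_of_mem (hP : IsPartialTableau k t cols) {j : ℕ} (hj : j < cols.length) {x : ℕ}
    (hx : x ∈ colAt cols j) : x ≤ t :=
  (hP.mem_Icc j hj x hx).2

lemma append_succ (hP : IsPartialTableau k t cols) :
    IsPartialTableau k (t + 1) (cols ++ [[t + 1]]) := by
  constructor
  · exact forall_colAt_append (P := (· ≠ [])) hP.ne_nil (List.cons_ne_nil _ _)
  · exact forall_colAt_append (P := (·.length ≤ k + 1)) hP.length_le (by simp)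
  · exact forall_colAt_append (P := (·.Pairwise (· < ·))) hP.sorted
      (List.pairwise_singleton _ _)
  · refine forall_colAt_append (P := fun c => ∀ x ∈ c, 1 ≤ x ∧ x ≤ t + 1)
      (fun j hj x hx => ?_) (by simp)
    have := hP.mem_Icc j hj x hx; omega
  · intro x hx1 hx2
    rcases Nat.lt_or_ge x (t + 1) with h | h
    · obtain ⟨j, hj, hm⟩ := hP.exists_mem x hx1 (by omega)
      exact ⟨j, by simp; omega, by rwa [colAt_append_of_lt hj]⟩
    · exact ⟨cols.length, by simp, by rw [colAt_append_length]; simp; omega⟩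
  · intro j hj j' hj' x hx hx'
    rcases colAt_append_cases hj with ⟨hj, h⟩ | ⟨rfl, h⟩ <;>
      rcases colAt_append_cases hj' with ⟨hj', h'⟩ | ⟨rfl, h'⟩ <;>
      rw [h] at hx <;> rw [h'] at hx'
    · exact hP.eq_of_mem j hj j' hj' x hx hx'
    all_goals simp at hx hx'
    · have := hP.le_of_mem hj hx; omega
    · have := hP.le_of_mem hj' hx'; omega
  · simp [hP.sum_length]
  · intro j j' hjj hj'
    rcases colAt_append_cases hj' with ⟨hj', h'⟩ | ⟨rfl, h'⟩
    · rw [h', colAt_append_of_lt (by omega)]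
      exact hP.length_antitone j j' hjj hj'
    · rw [h']
      rcases colAt_append_cases (l := [t + 1]) (by simp; omega : j < _) with
        ⟨hj, h⟩ | ⟨rfl, h⟩ <;> rw [h]
      exact List.length_pos_iff.mpr (hP.ne_nil j hj)
  · intro j j' hjj hj' i hi
    rcases colAt_append_cases hj' with ⟨hj', h'⟩ | ⟨rfl, h'⟩ <;> rw [h'] at hi ⊢ <;>
      rw [colAt_append_of_lt (by omega)]
    · exact hP.row_lt j j' hjj hj' i hi
    · simp only [List.length_singleton, Nat.lt_one_iff] at hi
      subst hi
      have := hP.le_of_mem hjj (List.getD_mem (d := 0) (List.length_pos_iff.mpr (hP.ne_nil j hjj)))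
      simp only [List.getD_cons_zero]
      omega

lemma exists_isSmallestActive (hP : IsPartialTableau k t cols)
    (hroom : t < (k + 1) * cols.length) : ∃ j, IsSmallestActive k cols j := by
  set S := (Finset.range cols.length).filter (fun j => (colAt cols j).length < k + 1)
  have hS : S.Nonempty := by
    by_contra hS
    have hfull : ∀ x ∈ cols.map List.length, k + 1 ≤ x := by
      simp only [List.mem_map]
      rintro _ ⟨c, hc, rfl⟩
      obtain ⟨j, hj, rfl⟩ := exists_colAt_eq hc
      by_contra h
      exact hS ⟨j, by simp [S, hj]; omega⟩
    have := List.card_nsmul_le_sum _ _ hfull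
    rw [List.length_map, smul_eq_mul, hP.sum_length, mul_comm] at this
    omega
  obtain ⟨j, hjS, hmin⟩ := S.exists_min_image (fun j => (colAt cols j).getLastD 0) hS
  simp only [S, Finset.mem_filter, Finset.mem_range] at hjS hmin
  refine ⟨j, hjS.1, hjS.2, fun c hc hcj hact =>
    (hmin c ⟨hc, hact⟩).lt_of_ne fun heq => hcj ?_⟩
  refine hP.eq_of_mem c hc j hjS.1 _ (List.getLastD_mem (d := 0) (hP.ne_nil c hc)) ?_
  rw [← heq]
  exact List.getLastD_mem (hP.ne_nil j hjS.1)

variable {j : ℕ}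

lemma length_lt_of_lt (hP : IsPartialTableau k t cols) (hj : IsSmallestActive k cols j)
    {c : ℕ} (hc : c < j) : (colAt cols j).length < (colAt cols c).length := by
  obtain ⟨hjlen, hact, hmin⟩ := hj
  by_contra hcon
  have heq := le_antisymm (not_lt.1 hcon) (hP.length_antitone c j hc.le hjlen)
  have hb := hmin c (hc.trans hjlen) hc.ne (heq ▸ hact)
  have hpos := List.length_pos_iff.mpr (hP.ne_nil j hjlen)
  have hrow := hP.row_lt c j hc hjlen ((colAt cols j).length - 1) (by omega)
  rw [List.getLastD_eq_getD, List.getLastD_eq_getD, heq] at hb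
  exact lt_asymm hb hrow

lemma length_antitone_addBelow (hP : IsPartialTableau k t cols) (hj : IsSmallestActive k cols j)
    {a b : ℕ} (hab : a ≤ b) (hb : b < cols.length) :
    (colAt (addBelow cols j (t + 1)) b).length ≤ (colAt (addBelow cols j (t + 1)) a).length := by
  by_cases hbj : b = j
  · subst hbj
    rcases hab.lt_or_eq with hab | rfl
    · rw [colAt_addBelow_self hb, colAt_addBelow_of_ne hab.ne, List.length_append,
        List.length_singleton]
      exact hP.length_lt_of_lt hj hab
    · exact le_rfl
  · rw [colAt_addBelow_of_ne hbj]
    by_cases haj : a = j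
    · subst haj
      rw [colAt_addBelow_self hj.1, List.length_append]
      exact (hP.length_antitone a b hab hb).trans (Nat.le_add_right _ _)
    · rw [colAt_addBelow_of_ne haj]
      exact hP.length_antitone a b hab hb

lemma row_lt_addBelow (hP : IsPartialTableau k t cols) (hj : IsSmallestActive k cols j)
    {a b : ℕ} (hab : a < b) (hb : b < cols.length) {i : ℕ}
    (hi : i < (colAt (addBelow cols j (t + 1)) b).length) :
    (colAt (addBelow cols j (t + 1)) a).getD i 0 <
      (colAt (addBelow cols j (t + 1)) b).getD i 0 := by
  by_cases hbj : b = j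
  · subst hbj
    rw [colAt_addBelow_of_ne hab.ne, colAt_addBelow_self hb] at *
    rw [List.length_append, List.length_singleton] at hi
    rcases Nat.lt_or_ge i (colAt cols b).length with hi' | hi'
    · rw [List.getD_append _ _ _ _ hi']
      exact hP.row_lt a b hab hb i hi'
    · rw [show i = (colAt cols b).length by omega, List.getD_concat_length]
      have hlt := hP.length_lt_of_lt hj hab
      exact Nat.lt_succ_of_le (hP.le_of_mem (hab.trans hb) (List.getD_mem hlt))
  · rw [colAt_addBelow_of_ne hbj] at hi ⊢
    by_cases haj : a = j
    · subst haj
      have hle := hP.length_antitone a b hab.le hb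
      rw [colAt_addBelow_self hj.1, List.getD_append _ _ _ _ (by omega)]
      exact hP.row_lt a b hab hb i hi
    · rw [colAt_addBelow_of_ne haj]
      exact hP.row_lt a b hab hb i hi

lemma addBelow_succ (hP : IsPartialTableau k t cols) (hj : IsSmallestActive k cols j) :
    IsPartialTableau k (t + 1) (addBelow cols j (t + 1)) := by
  have hjlen := hj.1
  have hold : ∀ c, c < (addBelow cols j (t + 1)).length → c < cols.length := by simp
  constructor
  · exact forall_colAt_addBelow (P := (· ≠ [])) (fun c hc _ => hP.ne_nil c hc) (by simp)
  · exact forall_colAt_addBelow (P := (·.length ≤ k + 1)) (fun c hc _ => hP.length_le c hc)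
      (by simpa using hj.2.1)
  · refine forall_colAt_addBelow (P := (·.Pairwise (· < ·))) (fun c hc _ => hP.sorted c hc) ?_
    refine List.pairwise_append.2 ⟨hP.sorted j hjlen, List.pairwise_singleton _ _, ?_⟩
    intro a ha b hb
    rw [List.mem_singleton.1 hb]
    exact Nat.lt_succ_of_le (hP.le_of_mem hjlen ha)
  · intro c hc x hx
    rcases mem_colAt_addBelow hx with h | ⟨_, rfl⟩
    · have := hP.mem_Icc c (hold c hc) x h; omega
    · omega
  · intro x hx1 hx2
    rcases Nat.lt_or_ge x (t + 1) with h | h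
    · obtain ⟨c, hc, hxc⟩ := hP.exists_mem x hx1 (by omega)
      exact ⟨c, by simpa using hc, mem_colAt_addBelow_of_mem hxc⟩
    · refine ⟨j, by simpa using hjlen, ?_⟩
      rw [colAt_addBelow_self hjlen, show x = t + 1 by omega]
      simp
  · intro c hc c' hc' x hx hx'
    rcases mem_colAt_addBelow hx with h | ⟨rfl, rfl⟩ <;>
      rcases mem_colAt_addBelow hx' with h' | ⟨rfl, hx⟩
    · exact hP.eq_of_mem c (hold c hc) c' (hold c' hc') x h h'
    · exact absurd (hP.le_of_mem (hold c hc) h) (by omega)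
    · exact absurd (hP.le_of_mem (hold c' hc') h') (by omega)
    · rfl
  · rw [sum_length_addBelow hjlen, hP.sum_length]
  · exact fun a b hab hb => hP.length_antitone_addBelow hj hab (hold b hb)
  · exact fun a b hab hb i hi => hP.row_lt_addBelow hj hab (hold b hb) hi

end IsPartialTableau

namespace FillInv

variable {k t j : ℕ} {w : List Bool} {cols : List (List ℕ)}

lemma append_succ (hI : FillInv k w t cols) (hl : w.getD t false = true) :
    FillInv k w (t + 1) (cols ++ [[t + 1]]) := by
  refine ⟨hI.toIsPartialTableau.append_succ, ?_, fun x => ?_, ?_, ?_⟩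
  · rw [List.length_append, List.length_singleton, hI.length_eq, upCount_succ, if_pos hl]
  · constructor
    · rintro ⟨j, hj, he⟩
      rcases colAt_append_cases hj with ⟨hj, h⟩ | ⟨rfl, h⟩ <;> rw [h] at he
      · obtain ⟨h1, h2, h3⟩ := (hI.head_iff x).1 ⟨j, hj, he⟩
        exact ⟨h1, by omega, h3⟩
      · rw [← he]
        exact ⟨by simp, le_rfl, by simpa using hl⟩
    · rintro ⟨hx1, hx2, hx3⟩
      rcases Nat.lt_or_ge x (t + 1) with h | h
      · obtain ⟨j, hj, he⟩ := (hI.head_iff x).2 ⟨hx1, by omega, hx3⟩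
        exact ⟨j, by simp; omega, by rwa [colAt_append_of_lt hj]⟩
      · exact ⟨cols.length, by simp, by rw [colAt_append_length]; simp; omega⟩
  · intro j hj hact c hc hcj x hx y hy hbx hby
    rcases colAt_append_cases hc with ⟨hc, h⟩ | ⟨rfl, h⟩ <;> rw [h] at hx hy
    · rcases colAt_append_cases hj with ⟨hj, h'⟩ | ⟨rfl, h'⟩ <;> rw [h'] at hact hbx hby
      · exact hI.below_active j hj hact c hc hcj x hx y hy hbx hby
      · have := hI.le_of_mem hc hx; simp at hbx; omega
    · simp at hx hy; omega
  · intro j hj i hi c hc x hx y hy hxy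
    rcases colAt_append_cases hj with ⟨hj, h⟩ | ⟨rfl, h⟩ <;> rw [h] at hi ⊢
    · rcases colAt_append_cases hc with ⟨hc, h'⟩ | ⟨rfl, h'⟩ <;> rw [h'] at hx hy
      · exact hI.no_bad j hj i hi c hc x hx y hy hxy
      · simp at hx hy; omega
    · simp at hi

lemma below_active_addBelow (hI : FillInv k w t cols) (hj : IsSmallestActive k cols j)
    {a : ℕ} (ha : a < cols.length) (hact : (colAt (addBelow cols j (t + 1)) a).length < k + 1)
    {c : ℕ} (hc : c < cols.length) (hca : c ≠ a) {x y : ℕ}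
    (hx : x ∈ colAt (addBelow cols j (t + 1)) c) (hy : y ∈ colAt (addBelow cols j (t + 1)) c)
    (hbx : (colAt (addBelow cols j (t + 1)) a).getLastD 0 < x)
    (hby : (colAt (addBelow cols j (t + 1)) a).getLastD 0 < y) : x = y := by
  by_cases haj : a = j
  · subst haj
    rw [colAt_addBelow_self ha, List.getLastD_concat] at hbx
    rcases mem_colAt_addBelow hx with h | ⟨h, _⟩
    exacts [absurd (hI.le_of_mem hc h) (by omega), absurd h hca]
  rw [colAt_addBelow_of_ne haj] at hact hbx hby
  have hbelow : ∀ z ∈ colAt cols j, z < (colAt cols a).getLastD 0 := fun z hz =>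
    (List.le_getLastD_of_mem (hI.sorted j hj.1) hz).trans_lt (hj.2.2 a ha haj hact)
  rcases mem_colAt_addBelow hx with hx' | ⟨rfl, rfl⟩ <;>
    rcases mem_colAt_addBelow hy with hy' | ⟨hcj, rfl⟩
  · exact hI.below_active a ha hact c hc hca x hx' y hy' hbx hby
  · exact absurd (hbelow x (hcj ▸ hx')) (by omega)
  · exact absurd (hbelow y hy') (by omega)
  · rfl

lemma no_bad_addBelow (hI : FillInv k w t cols) (hj : IsSmallestActive k cols j)
    {a : ℕ} (ha : a < cols.length) {i : ℕ}
    (hi : i + 1 < (colAt (addBelow cols j (t + 1)) a).length) {c : ℕ} (hc : c < cols.length)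
    {x y : ℕ} (hx : x ∈ colAt (addBelow cols j (t + 1)) c)
    (hy : y ∈ colAt (addBelow cols j (t + 1)) c) (hxy : x < y) :
    ¬((colAt (addBelow cols j (t + 1)) a).getD i 0 < x ∧
      y < (colAt (addBelow cols j (t + 1)) a).getD (i + 1) 0) := by
  rintro ⟨hax, hyb⟩
  have hle : (colAt (addBelow cols j (t + 1)) a).getD (i + 1) 0 ≤ t + 1 := by
    rcases mem_colAt_addBelow (List.getD_mem hi) with h | ⟨_, h⟩
    exacts [(hI.le_of_mem ha h).trans (Nat.le_succ t), h.le]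
  have hx' := mem_colAt_of_mem_colAt_addBelow hx (by omega)
  have hy' := mem_colAt_of_mem_colAt_addBelow hy (by omega)
  by_cases hnew : a = j ∧ i + 1 = (colAt cols j).length
  · obtain ⟨rfl, hi'⟩ := hnew
    rw [colAt_addBelow_self ha, List.getD_append _ _ _ _ (by omega),
      show i = (colAt cols a).length - 1 by omega, ← List.getLastD_eq_getD] at hax
    by_cases hca : c = a
    · subst hca
      exact absurd (List.le_getLastD_of_mem (hI.sorted c ha) hx') (by omega)
    · exact hxy.ne (hI.below_active a ha hj.2.1 c hc hca x hx' y hy' hax (hax.trans hxy))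
  · have hold : i + 1 < (colAt cols a).length ∧ ∀ i' ≤ i + 1,
        (colAt (addBelow cols j (t + 1)) a).getD i' 0 = (colAt cols a).getD i' 0 := by
      by_cases haj : a = j
      · subst haj
        rw [colAt_addBelow_self ha] at hi ⊢
        simp only [List.length_append, List.length_singleton] at hi
        exact ⟨by omega, fun i' hi' => List.getD_append _ _ _ _ (by omega)⟩
      · rw [colAt_addBelow_of_ne haj] at hi ⊢
        exact ⟨hi, fun _ _ => rfl⟩
    rw [hold.2 i (by omega)] at hax
    rw [hold.2 (i + 1) le_rfl] at hyb
    exact hI.no_bad a ha i hold.1 c hc x hx' y hy' hxy ⟨hax, hyb⟩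

lemma addBelow_succ (hI : FillInv k w t cols) (hl : w.getD t false = false)
    (hj : IsSmallestActive k cols j) : FillInv k w (t + 1) (addBelow cols j (t + 1)) := by
  refine ⟨hI.toIsPartialTableau.addBelow_succ hj, ?_, fun x => ?_,
    fun a ha hact c hc hca x hx y hy => ?_, fun a ha i hi c hc x hx y hy => ?_⟩
  · rw [length_addBelow, hI.length_eq, upCount_succ, hl]; rfl
  · have heads : (∃ c < (addBelow cols j (t + 1)).length,
        (colAt (addBelow cols j (t + 1)) c).getD 0 0 = x) ↔
        ∃ c < cols.length, (colAt cols c).getD 0 0 = x := by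
      simp only [length_addBelow]
      exact exists_congr fun c => and_congr_right fun hc => by
        rw [head_colAt_addBelow (hI.ne_nil c hc)]
    rw [heads, hI.head_iff]
    refine ⟨fun ⟨h1, h2, h3⟩ => ⟨h1, by omega, h3⟩,
      fun ⟨h1, h2, h3⟩ => ⟨h1, ?_, h3⟩⟩
    refine Nat.lt_succ_iff.1 (h2.lt_of_ne fun hx => ?_)
    rw [hx, Nat.add_sub_cancel, hl] at h3
    exact Bool.false_ne_true h3
  · exact hI.below_active_addBelow hj (by simpa using ha) hact (by simpa using hc) hca hx hy
  · exact hI.no_bad_addBelow hj (by simpa using ha) hi (by simpa using hc) hx hy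

end FillInv

lemma fillInv_of_isDyck {k m n : ℕ} {w : List Bool} (hD : IsDyck m n w) (hm : m = k * n + 1)
    {t : ℕ} (ht : t ≤ (k + 1) * n) : FillInv k w t (fillColsUpTo k w t) := by
  induction t with
  | zero => exact fillInv_nil k w
  | succ t ih =>
    have hI := ih (by omega)
    rw [fillColsUpTo_succ]
    cases hl : w.getD t false with
    | true => exact hI.append_succ hl
    | false =>
      obtain ⟨j, hj⟩ := hI.exists_isSmallestActive
        (hI.length_eq ▸ hD.lt_mul_upCount hm (by omega) hl)
      rw [fillStep_false_of_isSmallestActive hj]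
      exact hI.addBelow_succ hl hj

lemma IsPartialTableau.length_colAt_eq {k n : ℕ} {cols : List (List ℕ)}
    (hP : IsPartialTableau k ((k + 1) * n) cols) (hlen : cols.length = n) {j : ℕ}
    (hj : j < n) : (colAt cols j).length = k + 1 := by
  by_contra hne
  have hle : ∀ c ∈ cols, c.length ≤ k + 1 := fun c hc => by
    obtain ⟨j, hj, rfl⟩ := exists_colAt_eq hc
    exact hP.length_le j hj
  have hlt := List.sum_lt_sum List.length (fun _ => k + 1) hle
    ⟨_, colAt_mem (hlen ▸ hj), (hP.length_le j (hlen ▸ hj)).lt_of_ne hne⟩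
  rw [hP.sum_length, List.map_const', List.sum_replicate, hlen, smul_eq_mul, mul_comm] at hlt
  exact lt_irrefl _ hlt

lemma FillInv.isFussTableau {k n : ℕ} {w : List Bool} {cols : List (List ℕ)}
    (hI : FillInv k w ((k + 1) * n) cols) (hlen : cols.length = n) :
    IsFussTableau k n (fun i j => (colAt cols j).getD i 0) := by
  have hj : ∀ j : Fin n, (j : ℕ) < cols.length := fun j => hlen ▸ j.2
  have hi : ∀ (i : Fin (k + 1)) (j : Fin n), (i : ℕ) < (colAt cols j).length := fun i j => by
    rw [hI.length_colAt_eq hlen j.2]; exact i.2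
  have hmem : ∀ (i : Fin (k + 1)) (j : Fin n), (colAt cols j).getD i 0 ∈ colAt cols j :=
    fun i j => List.getD_mem (hi i j)
  refine ⟨⟨fun i j => ?_, fun p q hpq => ?_, fun i a b hab => ?_, fun j a b hab => ?_⟩,
    fun i hi' j r r' c hrr ⟨h1, h2, h3⟩ => ?_⟩
  · exact Finset.mem_Icc.2 (hI.mem_Icc j (hj j) _ (hmem i j))
  · have hcol : p.2 = q.2 := Fin.ext <| hI.eq_of_mem _ (hj p.2) _ (hj q.2) _ (hmem p.1 p.2)
      (by simp only at hpq; rw [hpq]; exact hmem q.1 q.2)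
    simp only [hcol] at hpq
    have hnodup := (hI.sorted _ (hj q.2)).imp ne_of_lt
    exact Prod.ext (Fin.ext ((List.getD_inj (hi _ _) (hi _ _) hnodup).1 hpq)) hcol
  · exact hI.row_lt a b hab (hj b) i (hi i b)
  · exact (hI.sorted j (hj j)).rel_getD hab (hi b j)
  · refine hI.no_bad j (hj j) i ?_ c (hj c) _ (hmem r c) _ (hmem r' c) h2 ⟨h1, h3⟩
    rw [hI.length_colAt_eq hlen j.2]
    exact hi'

section DyckToTableau

variable {k m n : ℕ} {w : List Bool}

lemma fillInv_fillCols (hD : IsDyck m n w) (hm : m = k * n + 1) :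
    FillInv k w ((k + 1) * n) (fillCols k w) := by
  have : w.length - 1 = (k + 1) * n := by rw [hD.1, hm]; ring_nf; omega
  rw [fillCols, this]
  exact fillInv_of_isDyck hD hm le_rfl

lemma length_fillCols (hD : IsDyck m n w) (hm : m = k * n + 1) (hn : 0 < n) :
    (fillCols k w).length = n := by
  have : (k + 1) * n = m + n - 1 := by rw [hm]; ring_nf; omega
  rw [(fillInv_fillCols hD hm).length_eq, this, hD.upCount_pred_length (by omega) hn]

lemma isFussTableau_fillTableau (hD : IsDyck m n w) (hm : m = k * n + 1) (hn : 0 < n) :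
    IsFussTableau k n (fillTableau k n w) :=
  (fillInv_fillCols hD hm).isFussTableau (length_fillCols hD hm hn)

end DyckToTableau

def topRowWord (k n : ℕ) (T : Fin (k + 1) → Fin n → ℕ) : List Bool :=
  List.ofFn fun x : Fin ((k + 1) * n + 1) => decide (∃ j : Fin n, T 0 j = x + 1)

section topRowWord

variable {k n : ℕ} {T : Fin (k + 1) → Fin n → ℕ}

@[simp] lemma length_topRowWord : (topRowWord k n T).length = (k + 1) * n + 1 := List.length_ofFn

lemma getD_topRowWord {x : ℕ} (hx : x < (k + 1) * n + 1) :
    (topRowWord k n T).getD x false = decide (∃ j : Fin n, T 0 j = x + 1) := by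
  rw [List.getD_eq_getElem _ _ (by simpa using hx)]
  simp only [topRowWord, List.getElem_ofFn]

end topRowWord

lemma topRowWord_fillTableau {k m n : ℕ} {w : List Bool} (hD : IsDyck m n w) (hm : m = k * n + 1)
    (hn : 0 < n) : topRowWord k n (fillTableau k n w) = w := by
  have hI := fillInv_fillCols hD hm
  have hlen := length_fillCols hD hm hn
  have hkn : (k + 1) * n = k * n + n := by ring
  have hwlen : w.length = (k + 1) * n + 1 := by rw [hD.1, hm]; omega
  have hletter : ∀ x < w.length,
      w.getD x false = decide (∃ j : Fin n, fillTableau k n w 0 j = x + 1) := by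
    intro x hx
    rw [Bool.eq_iff_iff, decide_eq_true_iff]
    rcases Nat.lt_or_ge x ((k + 1) * n) with hx' | hx'
    · constructor
      · intro h
        obtain ⟨j, hj, he⟩ := (hI.head_iff (x + 1)).2 ⟨by omega, by omega, by simpa using h⟩
        exact ⟨⟨j, hlen ▸ hj⟩, he⟩
      · rintro ⟨j, he⟩
        simpa using ((hI.head_iff (x + 1)).1 ⟨j, hlen ▸ j.2, he⟩).2.2
    · rw [show x = m + n - 1 by omega, hD.getD_last (by omega) hn]
      refine ⟨Bool.false_ne_true.elim, fun ⟨j, hj⟩ => ?_⟩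
      have := Finset.mem_Icc.1 ((isFussTableau_fillTableau hD hm hn).1.1 0 j)
      omega
  refine List.ext_getElem (by rw [length_topRowWord, hwlen]) fun x h₁ h₂ => ?_
  rw [← List.getD_eq_getElem _ false h₁, ← List.getD_eq_getElem _ false h₂,
    getD_topRowWord (by simpa using h₁), hletter x h₂]

section Truncation

variable {k n : ℕ} (T : Fin (k + 1) → Fin n → ℕ)

def colCount (t : ℕ) (j : Fin n) : ℕ := (Finset.univ.filter fun i => T i j ≤ t).card

def topCount (t : ℕ) : ℕ := (Finset.univ.filter fun j => T 0 j ≤ t).card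

def truncCol (t : ℕ) (j : Fin n) : List ℕ := (List.ofFn fun i => T i j).take (colCount T t j)

-- The entries `≤ t` of `T`; as `T` increases, they fill exactly its first `topCount T t` columns.
def truncCols (t : ℕ) : List (List ℕ) :=
  ((List.finRange n).take (topCount T t)).map (truncCol T t)

variable {T}

lemma colCount_le (t : ℕ) (j : Fin n) : colCount T t j ≤ k + 1 :=
  (Finset.card_filter_le _ _).trans (by simp)

lemma topCount_le (t : ℕ) : topCount T t ≤ n :=
  (Finset.card_filter_le _ _).trans (by simp)

lemma length_truncCol (t : ℕ) (j : Fin n) : (truncCol T t j).length = colCount T t j := by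
  rw [truncCol, List.length_take, List.length_ofFn, min_eq_left (colCount_le t j)]

lemma length_truncCols (t : ℕ) : (truncCols T t).length = topCount T t := by
  rw [truncCols, List.length_map, List.length_take, List.length_finRange,
    min_eq_left (topCount_le t)]

lemma colAt_truncCols {t j : ℕ} (hj : j < topCount T t) :
    colAt (truncCols T t) j = truncCol T t ⟨j, hj.trans_le (topCount_le t)⟩ := by
  rw [colAt, List.getD_eq_getElem _ _ (by rwa [length_truncCols])]
  simp [truncCols]

lemma colCount_of_eq {t : ℕ} {r : Fin (k + 1)} {j : Fin n} (hcol : StrictMono (T · j))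
    (h : T r j = t + 1) : colCount T t j = r := by
  rw [← hcol.card_filter_lt_eq h]
  simp only [colCount, Nat.lt_succ_iff]

lemma topCount_of_eq {t : ℕ} {j : Fin n} (hrow : StrictMono (T 0)) (h : T 0 j = t + 1) :
    topCount T t = j := by
  rw [← hrow.card_filter_lt_eq h]
  simp only [topCount, Nat.lt_succ_iff]

lemma topCount_succ_of_ne {t : ℕ} (h : ∀ j, T 0 j ≠ t + 1) :
    topCount T (t + 1) = topCount T t :=
  card_filter_le_succ_of_ne t h

lemma le_iff_lt_colCount {j : Fin n} (hcol : StrictMono (T · j)) (t : ℕ) (i : Fin (k + 1)) :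
    T i j ≤ t ↔ (i : ℕ) < colCount T t j :=
  hcol.monotone.le_iff_lt_card_filter t i

lemma le_iff_lt_topCount (hrow : StrictMono (T 0)) (t : ℕ) (j : Fin n) :
    T 0 j ≤ t ↔ (j : ℕ) < topCount T t :=
  hrow.monotone.le_iff_lt_card_filter t j

lemma truncCol_succ_of_eq {t : ℕ} {r : Fin (k + 1)} {j : Fin n} (hcol : StrictMono (T · j))
    (h : T r j = t + 1) : truncCol T (t + 1) j = truncCol T t j ++ [t + 1] := by
  have hle : colCount T (t + 1) j = r + 1 := hcol.card_filter_le_eq h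
  rw [truncCol, truncCol, hle, colCount_of_eq hcol h, List.take_add_one, List.getElem?_ofFn]
  simp [h, r.2]

lemma truncCol_succ_of_ne {t : ℕ} {j : Fin n} (h : ∀ i, T i j ≠ t + 1) :
    truncCol T (t + 1) j = truncCol T t j := by
  rw [truncCol, truncCol, colCount, colCount, card_filter_le_succ_of_ne t h]

lemma getD_truncCol {t : ℕ} {i : Fin (k + 1)} {j : Fin n} (h : (i : ℕ) < colCount T t j) :
    (truncCol T t j).getD i 0 = T i j := by
  rw [List.getD_eq_getElem _ _ (by rwa [length_truncCol])]
  simp only [truncCol, List.getElem_take, List.getElem_ofFn]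

lemma getLastD_truncCol {t : ℕ} {j : Fin n} (h : 0 < colCount T t j) :
    (truncCol T t j).getLastD 0 =
      T ⟨colCount T t j - 1, by have := colCount_le (T := T) t j; omega⟩ j := by
  rw [List.getLastD_eq_getD, length_truncCol,
    List.getD_eq_getElem _ _ (by rw [length_truncCol]; omega)]
  simp only [truncCol, List.getElem_take, List.getElem_ofFn]

end Truncation

section Filling

variable {k n : ℕ} {T : Fin (k + 1) → Fin n → ℕ} {t : ℕ}

lemma truncCols_succ_of_top (hT : IsFilling k n T) {j₀ : Fin n} (h : T 0 j₀ = t + 1) :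
    truncCols T (t + 1) = truncCols T t ++ [[t + 1]] := by
  have hrow := hT.2.2.1 0
  have htop : topCount T t = j₀ := topCount_of_eq hrow h
  have htop' : topCount T (t + 1) = j₀ + 1 := hrow.card_filter_le_eq h
  refine ext_colAt (by simp [length_truncCols, htop, htop']) fun j hj => ?_
  rw [length_truncCols, htop'] at hj
  rcases Nat.lt_or_ge j j₀ with hj' | hj'
  · rw [colAt_append_of_lt (by rwa [length_truncCols, htop]), colAt_truncCols (by omega),
      colAt_truncCols (by omega), truncCol_succ_of_ne fun i hi => ?_]
    exact hj'.ne (congrArg Fin.val (hT.eq_and_eq_of_eq (hi.trans h.symm)).2)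
  · obtain rfl : j = j₀ := by omega
    have hnew : colAt (truncCols T t ++ [[t + 1]]) j₀ = [t + 1] := by
      rw [show (j₀ : ℕ) = (truncCols T t).length by rw [length_truncCols, htop]]
      exact colAt_append_length
    have hempty : truncCol T t j₀ = [] := by
      rw [← List.length_eq_zero_iff, length_truncCol, colCount_of_eq (hT.2.2.2 j₀) h,
        Fin.val_zero]
    rw [colAt_truncCols (by omega), hnew, Fin.eta, truncCol_succ_of_eq (hT.2.2.2 j₀) h, hempty,
      List.nil_append]

lemma lt_topCount_of_eq (hT : IsFilling k n T) {r : Fin (k + 1)} {j₀ : Fin n}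
    (h : T r j₀ = t + 1) (hr : r ≠ 0) : (j₀ : ℕ) < topCount T t := by
  rw [← le_iff_lt_topCount (hT.2.2.1 0)]
  have := hT.2.2.2 j₀ (Fin.pos_iff_ne_zero.2 hr)
  simp only at this
  omega

lemma top_ne_of_eq (hT : IsFilling k n T) {r : Fin (k + 1)} {j₀ : Fin n}
    (h : T r j₀ = t + 1) (hr : r ≠ 0) (j : Fin n) : T 0 j ≠ t + 1 :=
  fun h' => hr (hT.eq_and_eq_of_eq (h'.trans h.symm)).1.symm

lemma truncCols_succ_of_below (hT : IsFilling k n T) {r : Fin (k + 1)} {j₀ : Fin n}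
    (h : T r j₀ = t + 1) (hr : r ≠ 0) :
    truncCols T (t + 1) = addBelow (truncCols T t) j₀ (t + 1) := by
  have htop : topCount T (t + 1) = topCount T t := topCount_succ_of_ne (top_ne_of_eq hT h hr)
  refine ext_colAt (by rw [length_addBelow, length_truncCols, length_truncCols, htop])
    fun j hj => ?_
  rw [length_truncCols, htop] at hj
  by_cases hj₀ : j = j₀
  · subst hj₀
    rw [colAt_addBelow_self (by rwa [length_truncCols]), colAt_truncCols (by omega),
      colAt_truncCols hj, Fin.eta, truncCol_succ_of_eq (hT.2.2.2 j₀) h]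
  · rw [colAt_addBelow_of_ne hj₀, colAt_truncCols (by omega), colAt_truncCols hj,
      truncCol_succ_of_ne fun i hi =>
        hj₀ (congrArg Fin.val (hT.eq_and_eq_of_eq (hi.trans h.symm)).2)]

lemma isSmallestActive_truncCols (hT : IsFussTableau k n T) {r : Fin (k + 1)} {j₀ : Fin n}
    (h : T r j₀ = t + 1) (hr : r ≠ 0) : IsSmallestActive k (truncCols T t) j₀ := by
  have hj₀ := lt_topCount_of_eq hT.1 h hr
  have hcount := colCount_of_eq (hT.1.2.2.2 j₀) h
  have hr' : (r : ℕ) ≠ 0 := fun h0 => hr (Fin.ext h0)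
  refine ⟨by rwa [length_truncCols], ?_, fun c hc hcj hact => ?_⟩
  · rw [colAt_truncCols hj₀, Fin.eta, length_truncCol, hcount]
    exact r.2
  rw [length_truncCols] at hc
  set c' : Fin n := ⟨c, hc.trans_le (topCount_le t)⟩
  have hc'j : j₀ ≠ c' := fun h' => hcj (congrArg Fin.val h').symm
  rw [colAt_truncCols hc, length_truncCol] at hact
  set q := colCount T t c' with hq
  have hpos : 0 < q := by
    simpa using (le_iff_lt_colCount (hT.1.2.2.2 c') t 0).1
      ((le_iff_lt_topCount (hT.1.2.2.1 0) t c').2 hc)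
  have hnext : T r j₀ < T ⟨q - 1 + 1, by omega⟩ c' := by
    have hgt := (le_iff_lt_colCount (hT.1.2.2.2 c') t ⟨q, hact⟩).not.2 (lt_irrefl _)
    have hne : T ⟨q, hact⟩ c' ≠ t + 1 := fun h' =>
      hc'j (hT.1.eq_and_eq_of_eq (h'.trans h.symm)).2.symm
    rw [h, show (⟨q - 1 + 1, _⟩ : Fin (k + 1)) = ⟨q, hact⟩ from Fin.ext (by simp; omega)]
    omega
  have hrr : (⟨(r : ℕ) - 1, by omega⟩ : Fin (k + 1)) < r :=
    Fin.lt_def.2 (show (r : ℕ) - 1 < r by omega)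
  have key := hT.lt_of_lt_succ_row (i := ⟨q - 1, by omega⟩) (by simp; omega) hc'j hrr hnext
  rw [colAt_truncCols hj₀, colAt_truncCols hc, Fin.eta, getLastD_truncCol (by omega),
    getLastD_truncCol hpos]
  convert key using 3
  simp [hcount]

lemma topCount_zero (hT : IsFilling k n T) : topCount T 0 = 0 :=
  Finset.card_eq_zero.2 <| Finset.filter_eq_empty_iff.2 fun j _ => by
    have := Finset.mem_Icc.1 (hT.1 0 j); omega

lemma topCount_succ (hT : IsFilling k n T) (t : ℕ) :
    topCount T (t + 1) = topCount T t + if ∃ j, T 0 j = t + 1 then 1 else 0 := by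
  split_ifs with h
  · obtain ⟨j, hj⟩ := h
    rw [topCount_of_eq (hT.2.2.1 0) hj]
    exact (hT.2.2.1 0).card_filter_le_eq hj
  · exact topCount_succ_of_ne (not_exists.1 h)

lemma le_mul_topCount (hT : IsFilling k n T) (ht : t ≤ (k + 1) * n) :
    t ≤ (k + 1) * topCount T t := by
  conv_lhs => rw [← hT.card_filter_le ht]
  have hsub : (Finset.univ.filter fun p : Fin (k + 1) × Fin n => T p.1 p.2 ≤ t) ⊆
      Finset.univ ×ˢ Finset.univ.filter fun j => T 0 j ≤ t := fun p hp => by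
    simp only [Finset.mem_filter, Finset.mem_univ, true_and, Finset.mem_product] at hp ⊢
    exact ((hT.2.2.2 p.2).monotone (Fin.zero_le p.1)).trans hp
  simpa [topCount] using Finset.card_le_card hsub

lemma fillColsUpTo_topRowWord (hT : IsFussTableau k n T) (ht : t ≤ (k + 1) * n) :
    fillColsUpTo k (topRowWord k n T) t = truncCols T t := by
  induction t with
  | zero => simp [fillColsUpTo, truncCols, topCount_zero hT.1]
  | succ t ih =>
    rw [fillColsUpTo_succ, ih (by omega), getD_topRowWord (by omega)]
    obtain ⟨r, j₀, h⟩ := hT.1.exists_eq (by omega) ht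
    by_cases hr : r = 0
    · subst hr
      rw [decide_eq_true ⟨j₀, h⟩, truncCols_succ_of_top hT.1 h]
      simp [fillStep]
    · rw [decide_eq_false (not_exists.2 (top_ne_of_eq hT.1 h hr)),
        fillStep_false_of_isSmallestActive (isSmallestActive_truncCols hT h hr),
        truncCols_succ_of_below hT.1 h hr]

lemma fillTableau_topRowWord (hT : IsFussTableau k n T) :
    fillTableau k n (topRowWord k n T) = T := by
  funext i j
  have hle := (Finset.mem_Icc.1 (hT.1.1 i j)).2
  have htop := (le_iff_lt_topCount (hT.1.2.2.1 0) _ j).1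
    (((hT.1.2.2.2 j).monotone (Fin.zero_le i)).trans hle)
  change (colAt (fillCols k (topRowWord k n T)) j).getD i 0 = T i j
  rw [fillCols, length_topRowWord, Nat.add_sub_cancel, fillColsUpTo_topRowWord hT le_rfl,
    colAt_truncCols htop, Fin.eta, getD_truncCol ((le_iff_lt_colCount (hT.1.2.2.2 j) _ i).1 hle)]

lemma upCount_topRowWord (hT : IsFilling k n T) {x : ℕ} (hx : x ≤ (k + 1) * n + 1) :
    upCount (topRowWord k n T) x = topCount T x := by
  induction x with
  | zero => simp [upCount, topCount_zero hT]
  | succ x ih =>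
    rw [upCount_succ, ih (by omega), getD_topRowWord (by omega), topCount_succ hT]
    simp only [decide_eq_true_eq]

lemma isDyck_topRowWord {m : ℕ} (hT : IsFussTableau k n T) (hm : m = k * n + 1) :
    IsDyck m n (topRowWord k n T) := by
  have hkn : (k + 1) * n = k * n + n := by ring
  have hlen : (topRowWord k n T).length = m + n := by rw [length_topRowWord, hm]; omega
  have htop : topCount T ((k + 1) * n + 1) = n := by
    rw [topCount, Finset.filter_true_of_mem fun j _ => ?_, Finset.card_univ, Fintype.card_fin]
    have := Finset.mem_Icc.1 (hT.1.1 0 j); omega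
  have hcount : (topRowWord k n T).count true = n := by
    rw [← upCount_length, length_topRowWord, upCount_topRowWord hT.1 le_rfl, htop]
  refine ⟨hlen, hcount, fun x => ?_⟩
  rcases le_or_gt x ((k + 1) * n) with hx | hx
  · have hsum := upCount_add_rightCount (w := topRowWord k n T) (i := x) (by rw [hlen]; omega)
    rw [upCount_topRowWord hT.1 (by omega)] at hsum ⊢
    have hle := le_mul_topCount hT.1 hx
    set b := topCount T x
    calc n * rightCount (topRowWord k n T) x ≤ n * (k * b) := Nat.mul_le_mul_left n (by nlinarith)
      _ ≤ m * b := by rw [hm]; nlinarith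
  · have htake : (topRowWord k n T).take x = topRowWord k n T :=
      List.take_of_length_le (by simp; omega)
    have hup : upCount (topRowWord k n T) x = n := by rw [upCount, htake, hcount]
    have hright : rightCount (topRowWord k n T) x = m := by
      have := List.count_true_add_count_false (topRowWord k n T)
      rw [rightCount, htake]
      omega
    rw [hup, hright, mul_comm]

end Filling

end FillingBijection

theorem statement9_general (k n : ℕ) (hn : 0 < n) (m : ℕ) (hm : m = k * n + 1) :
    Set.BijOn (fillTableau k n) {w : List Bool | IsDyck m n w}
      {T : Fin (k + 1) → Fin n → ℕ | IsFussTableau k n T} :=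
  Set.InvOn.bijOn (f' := FillingBijection.topRowWord k n)
    ⟨fun _ hw => FillingBijection.topRowWord_fillTableau hw hm hn,
      fun _ hT => FillingBijection.fillTableau_topRowWord hT⟩
    (fun _ hw => FillingBijection.isFussTableau_fillTableau hw hm hn)
    (fun _ hT => FillingBijection.isDyck_topRowWord hT hm)

/-- For `m = kn+1`, the map `D ↦ T(D)` given by the filling
algorithm is a bijection from `𝒟_{m,n}` onto `𝒯ₙᵏ`. -/
theorem statement9 (k n : ℕ) (hk : 0 < k) (hn : 0 < n) (m : ℕ) (hm : m = k * n + 1) :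
    Set.BijOn (fillTableau k n) {w : List Bool | IsDyck m n w}
      {T : Fin (k + 1) → Fin n → ℕ | IsFussTableau k n T} :=
  statement9_general k n hn m hm
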